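/- arXiv:math/9912027 — 7 statements merged into one kernel-verified Lean document; each statement's English description precedes it below -/
import Mathlib

section
/- With respect to Thomas division, any monomial w has at most one Thomas involutive divisor in any finite set U: if u, v ∈ U both Thomas-divide w, then u = v. -/
/-- Monomials in `n` variables as exponent vectors; `u` divides `w`. -/
def mDvd {n : ℕ} (u w : Fin n → ℕ) : Prop := ∀ i, u i ≤ w i

/-- Thomas multiplicative variable. -/
def TMult {n : ℕ} (U : Finset (Fin n → ℕ)) (u : Fin n → ℕ) (i : Fin n) : Prop :=
  u i = U.sup (fun v => v i)

/-- Thomas involutive divisibility. -/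
def TDvd {n : ℕ} (U : Finset (Fin n → ℕ)) (u w : Fin n → ℕ) : Prop :=
  mDvd u w ∧ ∀ i, u i < w i → TMult U u i

/-- Janet multiplicative variable. -/
def JMult {n : ℕ} (U : Finset (Fin n → ℕ)) (u : Fin n → ℕ) (i : Fin n) : Prop :=
  u i = (U.filter (fun v => ∀ j, j < i → v j = u j)).sup (fun v => v i)

/-- Janet involutive divisibility. -/
def JDvd {n : ℕ} (U : Finset (Fin n → ℕ)) (u w : Fin n → ℕ) : Prop :=
  mDvd u w ∧ ∀ i, u i < w i → JMult U u i

/-- Pommaret multiplicative variable: `x_j` is multiplicative for `u` iff all variables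
with index larger than `j` have zero exponent in `u`. -/
def PMult {n : ℕ} (u : Fin n → ℕ) (j : Fin n) : Prop := ∀ i, j < i → u i = 0

/-- Pommaret involutive divisibility. -/
def PDvd {n : ℕ} (u w : Fin n → ℕ) : Prop :=
  mDvd u w ∧ ∀ i, u i < w i → PMult u i

/-! If `u` Thomas-divides `w`, every `v ∈ U` dividing `w` divides `u`: wherever `u` is strictly
below `w`, its exponent is the maximum over `U`. Applied in both directions, `u` and `v` divide
each other. -/

theorem mDvd_antisymm {n : ℕ} {u v : Fin n → ℕ} (huv : mDvd u v) (hvu : mDvd v u) : u = v :=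
  funext fun i => le_antisymm (huv i) (hvu i)

theorem TMult.le {n : ℕ} {U : Finset (Fin n → ℕ)} {u v : Fin n → ℕ} {i : Fin n}
    (hu : TMult U u i) (hv : v ∈ U) : v i ≤ u i :=
  hu ▸ Finset.le_sup (f := fun v => v i) hv

theorem TDvd.mDvd_of_mem {n : ℕ} {U : Finset (Fin n → ℕ)} {u v w : Fin n → ℕ}
    (hu : TDvd U u w) (hv : v ∈ U) (hvw : mDvd v w) : mDvd v u := fun i =>
  (lt_or_eq_of_le (hu.1 i)).elim (fun hlt => (hu.2 i hlt).le hv) fun heq => heq ▸ hvw i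

theorem thomas_divisor_unique {n : ℕ} (U : Finset (Fin n → ℕ)) (u v w : Fin n → ℕ)
    (hu : u ∈ U) (hv : v ∈ U) (hdu : TDvd U u w) (hdv : TDvd U v w) : u = v :=
  mDvd_antisymm (hdv.mDvd_of_mem hu hdu.1) (hdu.mDvd_of_mem hv hdv.1)
end

section
/- If a finite monomial set U is autoreduced with respect to Pommaret division (no element of U is a proper Pommaret multiple of another element of U), then for every u ∈ U, every Pommaret-multiplicative variable of u is also Janet-multiplicative: M_P(u,U) ⊆ M_J(u,U). Consequently every Pommaret divisor in U of a monomial w is also a Janet divisor of w. -/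
/-! If `v` agrees with `u` before position `i` and exceeds it at `i`, while `x_i` is Pommaret
multiplicative for `u`, then `v` is a Pommaret multiple of `u`: all exponents of `u` beyond `i`
vanish, and the only positions where `v` may exceed `u` are `i` and beyond. Autoreducedness
forbids this, so `u i` is maximal in its Janet class. -/

theorem PMult.mono {n : ℕ} {u : Fin n → ℕ} {i k : Fin n} (h : PMult u i) (hik : i ≤ k) :
    PMult u k :=
  fun m hm => h m (hik.trans_lt hm)

theorem pDvd_of_eq_of_lt {n : ℕ} {u v : Fin n → ℕ} {i : Fin n} (hP : PMult u i)
    (hagree : ∀ j, j < i → v j = u j) (hlt : u i < v i) : PDvd u v := by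
  refine ⟨fun k => ?_, fun k hk => hP.mono ?_⟩
  · rcases lt_trichotomy k i with h | rfl | h
    · exact (hagree k h).ge
    · exact hlt.le
    · simp [hP k h]
  · by_contra! hki
    exact hk.ne (hagree k hki).symm

theorem jMult_of_forall_le {n : ℕ} {U : Finset (Fin n → ℕ)} {u : Fin n → ℕ} {i : Fin n}
    (hu : u ∈ U) (hmax : ∀ v ∈ U, (∀ j, j < i → v j = u j) → v i ≤ u i) : JMult U u i := by
  refine le_antisymm ?_ (Finset.sup_le fun v hv => ?_)
  · exact Finset.le_sup (f := fun v : Fin n → ℕ => v i) (by simp [hu])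
  · rw [Finset.mem_filter] at hv
    exact hmax v hv.1 hv.2

theorem jDvd_of_pDvd {n : ℕ} {U : Finset (Fin n → ℕ)} {u w : Fin n → ℕ}
    (hPJ : ∀ i, PMult u i → JMult U u i) (h : PDvd u w) : JDvd U u w :=
  ⟨h.1, fun i hi => hPJ i (h.2 i hi)⟩

theorem pommaret_mult_subset_janet_mult_of_autoreduced {n : ℕ}
    (U : Finset (Fin n → ℕ))
    (hauto : ∀ u ∈ U, ∀ v ∈ U, u ≠ v → ¬ PDvd v u) :
    (∀ u ∈ U, ∀ i : Fin n, PMult u i → JMult U u i) ∧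
    (∀ u ∈ U, ∀ w : Fin n → ℕ, PDvd u w → JDvd U u w) := by
  have hPJ : ∀ u ∈ U, ∀ i : Fin n, PMult u i → JMult U u i := by
    refine fun u hu i hP => jMult_of_forall_le hu fun v hv hagree => ?_
    by_contra! hlt
    exact hauto v hv u hu (fun h => hlt.ne (congrFun h i).symm) (pDvd_of_eq_of_lt hP hagree hlt)
  exact ⟨hPJ, fun u hu _ => jDvd_of_pDvd (hPJ u hu)⟩
end

section
/- Thomas division is noetherian: for any finite set U of monomials there exists a finite Thomas-involutive set Ũ ⊇ U generating the same monomial ideal, namely the set V of all monomials v dividing h = x₁^{h₁}···xₙ^{hₙ} (where hᵢ = max_{u∈U} deg_i(u)) that are multiples of some element of U. Explicitly: V is Thomas-involutive, i.e., every monomial in the ideal generated by U has a Thomas involutive divisor in V. -/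
instance {n : ℕ} (u w : Fin n → ℕ) : Decidable (mDvd u w) := by
  unfold mDvd; infer_instance

theorem mDvd_iff_le {n : ℕ} {u w : Fin n → ℕ} : mDvd u w ↔ u ≤ w := Iff.rfl

theorem mem_image_finBox_iff {n : ℕ} {h v : Fin n → ℕ} :
    v ∈ (Finset.univ : Finset (∀ i : Fin n, Fin (h i + 1))).image (fun f i => (f i : ℕ)) ↔
      v ≤ h := by
  simp only [Finset.mem_image, Finset.mem_univ, true_and]
  constructor
  · rintro ⟨f, rfl⟩ i
    exact Nat.lt_succ_iff.mp (f i).isLt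
  · intro hv
    exact ⟨fun i => ⟨v i, Nat.lt_succ_of_le (hv i)⟩, rfl⟩

theorem Finset.sup_id_eq_of_subset_of_le {α : Type*} [SemilatticeSup α] [OrderBot α]
    {U V : Finset α} (hUV : U ⊆ V) (hV : ∀ v ∈ V, v ≤ U.sup id) : V.sup id = U.sup id :=
  le_antisymm (Finset.sup_le hV) (Finset.sup_mono hUV)

theorem tMult_iff {n : ℕ} {V : Finset (Fin n → ℕ)} {v : Fin n → ℕ} {i : Fin n} :
    TMult V v i ↔ v i = V.sup id i := by
  rw [TMult, Finset.sup_apply]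
  rfl

theorem tDvd_inf_sup_id {n : ℕ} (V : Finset (Fin n → ℕ)) (w : Fin n → ℕ) :
    TDvd V (w ⊓ V.sup id) w := by
  refine ⟨mDvd_iff_le.2 inf_le_left, fun i hi => tMult_iff.2 ?_⟩
  simp only [Pi.inf_apply, inf_lt_left, not_le] at hi ⊢
  exact min_eq_right hi.le

theorem thomas_noetherian {n : ℕ} (U : Finset (Fin n → ℕ)) :
    ∀ h : Fin n → ℕ, h = (fun i => U.sup (fun u => u i)) →
    ∀ V : Finset (Fin n → ℕ),
      V = ((Finset.univ : Finset (∀ i : Fin n, Fin (h i + 1))).image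
            (fun f i => (f i : ℕ))).filter (fun v => ∃ u ∈ U, mDvd u v) →
      U ⊆ V ∧
      (∀ w, (∃ u ∈ U, mDvd u w) ↔ (∃ v ∈ V, mDvd v w)) ∧
      (∀ w, (∃ u ∈ U, mDvd u w) → ∃ v ∈ V, TDvd V v w) := by
  intro h hh V hV
  have hlcm : h = U.sup id := by
    ext i
    rw [hh, Finset.sup_apply]
    rfl
  have hmem : ∀ v, v ∈ V ↔ v ≤ U.sup id ∧ ∃ u ∈ U, u ≤ v := fun v => by
    rw [hV, Finset.mem_filter, mem_image_finBox_iff, hlcm]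
    rfl
  have hUV : U ⊆ V := fun u hu => (hmem u).2 ⟨Finset.le_sup (f := id) hu, u, hu, le_rfl⟩
  have hsup : V.sup id = U.sup id :=
    Finset.sup_id_eq_of_subset_of_le hUV fun v hv => ((hmem v).1 hv).1
  refine ⟨hUV, fun w => ⟨fun ⟨u, hu, huw⟩ => ⟨u, hUV hu, huw⟩, fun ⟨v, hv, hvw⟩ => ?_⟩, ?_⟩
  · obtain ⟨-, u, hu, huv⟩ := (hmem v).1 hv
    exact ⟨u, hu, mDvd_iff_le.2 (huv.trans hvw)⟩
  · rintro w ⟨u, hu, huw⟩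
    have htrunc : w ⊓ V.sup id ∈ V := by
      rw [hsup, hmem]
      exact ⟨inf_le_right, u, hu, le_inf huw (Finset.le_sup (f := id) hu)⟩
    exact ⟨_, htrunc, tDvd_inf_sup_id V w⟩
end

section
/- Janet division is continuous: for any finite monomial set U, any finite sequence u₁,...,u_k of elements of U such that for each i < k there is a Janet-non-multiplicative variable x_j of u_i with u_{i+1} Janet-dividing u_i·x_j, consists of pairwise distinct elements. In fact u_{i+1} ≻_Lex u_i in the lexicographic order, so the sequence is strictly lex-increasing. -/
/-- `x` is lexicographically smaller than `y` (variable order `x₁ ≻ ⋯ ≻ xₙ`). -/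
def lexLt {n : ℕ} (x y : Fin n → ℕ) : Prop :=
  ∃ i, (∀ j, j < i → x j = y j) ∧ x i < y i

/-!
If `v` Janet-divides `a · x_j` with `a ∈ U`, then `v` agrees with `a` on every variable before
`x_j`: at the first disagreement `v` would have a smaller exponent than `a · x_j`, so that
variable would be multiplicative for `v`, and maximality of `v`'s exponent among the elements
of `U` sharing its prefix would be contradicted by `a`. The same argument at `x_j` itself shows
`v_j = a_j + 1` unless `x_j` is multiplicative for `a`. Hence each step of the chain is a strict
lexicographic increase, and a strictly increasing sequence has no repetitions.
-/

section Janet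

variable {n : ℕ} {U : Finset (Fin n → ℕ)} {a v w : Fin n → ℕ} {i : Fin n}

lemma JMult.le_of_mem (hv : JMult U v i) (ha : a ∈ U) (hprefix : ∀ m < i, a m = v m) :
    a i ≤ v i :=
  hv ▸ Finset.le_sup (f := fun t => t i) (Finset.mem_filter.2 ⟨ha, hprefix⟩)

lemma JMult.of_prefix_eq (hv : JMult U v i) (hprefix : ∀ m < i, a m = v m) (hi : a i = v i) :
    JMult U a i := by
  have hfilter : U.filter (fun t => ∀ m < i, t m = a m) = U.filter (fun t => ∀ m < i, t m = v m) :=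
    Finset.filter_congr fun t _ => forall₂_congr fun m hm => by rw [hprefix m hm]
  rw [JMult, hfilter, hi]
  exact hv

lemma JDvd.prefix_eq (hvw : JDvd U v w) (ha : a ∈ U) (hw : ∀ m < i, w m = a m) :
    ∀ m < i, v m = a m := by
  intro m
  induction m using WellFoundedLT.induction with
  | _ m ih =>
    intro hm
    have hle : v m ≤ a m := hw m hm ▸ hvw.1 m
    by_contra hne
    have hmult : JMult U v m := hvw.2 m (hw m hm ▸ lt_of_le_of_ne hle hne)
    have := hmult.le_of_mem ha fun t ht => (ih t ht (ht.trans hm)).symm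
    omega

lemma lexLt_of_jDvd_add_single (ha : a ∈ U) (hj : ¬ JMult U a i)
    (hd : JDvd U v (a + Pi.single i 1)) : lexLt a v := by
  have hprefix : ∀ m < i, v m = a m :=
    hd.prefix_eq ha fun m hm => by simp [hm.ne]
  refine ⟨i, fun m hm => (hprefix m hm).symm, ?_⟩
  by_contra! hle
  have hmult : JMult U v i := hd.2 i (by simp only [Pi.add_apply, Pi.single_eq_same]; omega)
  have hge : a i ≤ v i := hmult.le_of_mem ha fun m hm => (hprefix m hm).symm
  exact hj (hmult.of_prefix_eq (fun m hm => (hprefix m hm).symm) (le_antisymm hge hle))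

lemma lexLt_iff_toLex_lt {x y : Fin n → ℕ} : lexLt x y ↔ toLex x < toLex y := Iff.rfl

end Janet

lemma Fin.strictMono_of_lt_val_succ {α : Type*} [Preorder α] {k : ℕ} {f : Fin k → α}
    (h : ∀ i : Fin k, ∀ hi : (i : ℕ) + 1 < k, f i < f ⟨(i : ℕ) + 1, hi⟩) : StrictMono f := by
  cases k with
  | zero => exact fun i => i.elim0
  | succ m => exact Fin.strictMono_iff_lt_succ.2 fun i => h i.castSucc (by simp)

theorem janet_continuous {n k : ℕ} (U : Finset (Fin n → ℕ))
    (u : Fin k → (Fin n → ℕ)) (hU : ∀ i, u i ∈ U)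
    (hchain : ∀ i : Fin k, ∀ h : (i : ℕ) + 1 < k, ∃ j : Fin n,
      ¬ JMult U (u i) j ∧ JDvd U (u ⟨(i : ℕ) + 1, h⟩) (u i + Pi.single j 1)) :
    (∀ i : Fin k, ∀ h : (i : ℕ) + 1 < k, lexLt (u i) (u ⟨(i : ℕ) + 1, h⟩)) ∧
    Function.Injective u := by
  have hstep : ∀ i : Fin k, ∀ h : (i : ℕ) + 1 < k, lexLt (u i) (u ⟨(i : ℕ) + 1, h⟩) := by
    intro i h
    obtain ⟨j, hj, hd⟩ := hchain i h
    exact lexLt_of_jDvd_add_single (hU i) hj hd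
  have hmono : StrictMono (toLex ∘ u) :=
    Fin.strictMono_of_lt_val_succ fun i h => lexLt_iff_toLex_lt.1 (hstep i h)
  exact ⟨hstep, hmono.injective.of_comp⟩
end

section
/- Thomas division is continuous, and moreover for Thomas division a non-multiplicative prolongation can only be involutively divided by itself: if u, u' are elements of a finite set U, x_j is Thomas-non-multiplicative for u, and u' Thomas-divides u·x_j, then u' = u·x_j. Consequently any sequence u₁,...,u_k in U with u_{i+1} Thomas-dividing u_i·x_{j_i} (x_{j_i} non-multiplicative for u_i) has strictly increasing total degrees, hence pairwise distinct elements. -/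
/-! A variable that is Thomas-multiplicative for `u'` already carries the maximal exponent
occurring in `U`, so a proper Thomas divisor `u'` of `w` forces `w` to exceed that maximum in
some coordinate. A non-multiplicative prolongation `u · x_j` never does, since `x_j` still had
room below the maximum; hence its only Thomas divisor is itself, and every step of a chain of
such prolongations raises the total degree by exactly one. -/

theorem Fin.strictMono_of_lt_next {α : Type*} [Preorder α] {k : ℕ} (f : Fin k → α)
    (hf : ∀ i : Fin k, ∀ h : (i : ℕ) + 1 < k, f i < f ⟨(i : ℕ) + 1, h⟩) : StrictMono f := by
  cases k with
  | zero => exact fun i => i.elim0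
  | succ k => exact Fin.strictMono_iff_lt_succ.mpr fun i => hf i.castSucc (by simp)

theorem add_single_le_sup_of_not_tMult {n : ℕ} {U : Finset (Fin n → ℕ)} {u : Fin n → ℕ} (hu : u ∈ U)
    {j : Fin n} (hj : ¬ TMult U u j) (i : Fin n) :
    (u + Pi.single j 1 : Fin n → ℕ) i ≤ U.sup (fun v => v i) := by
  have hle : u i ≤ U.sup (fun v => v i) := Finset.le_sup (f := fun v => v i) hu
  rcases eq_or_ne i j with rfl | hij
  · simpa using lt_of_le_of_ne hle hj
  · simpa [hij] using hle

theorem TDvd.eq_of_le_sup {n : ℕ} {U : Finset (Fin n → ℕ)} {u w : Fin n → ℕ}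
    (hw : ∀ i, w i ≤ U.sup (fun v => v i)) (h : TDvd U u w) : u = w := by
  funext i
  by_contra hne
  have hlt : u i < w i := lt_of_le_of_ne (h.1 i) hne
  have hmult : u i = U.sup (fun v => v i) := h.2 i hlt
  exact absurd (hw i) (hmult ▸ hlt).not_ge

theorem sum_add_single_one {n : ℕ} (u : Fin n → ℕ) (j : Fin n) :
    ∑ t, (u + Pi.single j 1 : Fin n → ℕ) t = (∑ t, u t) + 1 := by
  simp [Finset.sum_add_distrib]

theorem thomas_continuous {n : ℕ} (U : Finset (Fin n → ℕ)) :
    (∀ u ∈ U, ∀ u' ∈ U, ∀ j : Fin n, ¬ TMult U u j →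
        TDvd U u' (u + Pi.single j 1) → u' = u + Pi.single j 1) ∧
    (∀ (k : ℕ) (u : Fin k → (Fin n → ℕ)), (∀ i, u i ∈ U) →
      (∀ i : Fin k, ∀ h : (i : ℕ) + 1 < k, ∃ j : Fin n,
        ¬ TMult U (u i) j ∧ TDvd U (u ⟨(i : ℕ) + 1, h⟩) (u i + Pi.single j 1)) →
      (∀ i : Fin k, ∀ h : (i : ℕ) + 1 < k,
          (∑ t, u i t) < ∑ t, u ⟨(i : ℕ) + 1, h⟩ t) ∧ Function.Injective u) := by
  have prolongation : ∀ u ∈ U, ∀ u' ∈ U, ∀ j : Fin n, ¬ TMult U u j →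
      TDvd U u' (u + Pi.single j 1) → u' = u + Pi.single j 1 :=
    fun u hu _ _ _ hj hdvd => hdvd.eq_of_le_sup (add_single_le_sup_of_not_tMult hu hj)
  refine ⟨prolongation, fun k u hU hchain => ?_⟩
  have step : ∀ i : Fin k, ∀ h : (i : ℕ) + 1 < k,
      (∑ t, u i t) < ∑ t, u ⟨(i : ℕ) + 1, h⟩ t := by
    intro i h
    obtain ⟨j, hj, hdvd⟩ := hchain i h
    rw [prolongation _ (hU i) _ (hU _) j hj hdvd, sum_add_single_one]
    exact Nat.lt_succ_self _
  exact ⟨step, Function.Injective.of_comp (f := fun v : Fin n → ℕ => ∑ t, v t)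
    (Fin.strictMono_of_lt_next _ step).injective⟩
end

section
/- Let L be a continuous involutive division and U a finite monomial set. If U is locally L-involutive (for every u ∈ U and every L-non-multiplicative variable xᵢ of u, the monomial u·xᵢ has an L-involutive divisor in U), then U is L-involutive: every multiple of an element of U has an L-involutive divisor in U. -/
/-- An abstract involutive division: to each element `u` of a finite monomial set `U` it
assigns a submonoid `L u U` of multiplicative monomials, satisfying the axioms
(a)-(d) of Gerdt-Blinkov. -/
structure InvDiv (n : ℕ) where
  L : (Fin n → ℕ) → Finset (Fin n → ℕ) → Set (Fin n → ℕ)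
  zero_mem : ∀ u U, (0 : Fin n → ℕ) ∈ L u U
  add_mem : ∀ u U v w, v ∈ L u U → w ∈ L u U → v + w ∈ L u U
  div_closed : ∀ u U v w, w ∈ L u U → mDvd v w → v ∈ L u U
  comparable : ∀ (U : Finset (Fin n → ℕ)) (u v : Fin n → ℕ), u ∈ U → v ∈ U →
      (∃ a ∈ L u U, ∃ b ∈ L v U, u + a = v + b) →
      (∃ b ∈ L v U, u = v + b) ∨ (∃ a ∈ L u U, v = u + a)
  trans : ∀ (U : Finset (Fin n → ℕ)) (u v : Fin n → ℕ), u ∈ U → v ∈ U →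
      (∃ a ∈ L u U, v = u + a) → L v U ⊆ L u U
  mono : ∀ (U V : Finset (Fin n → ℕ)), V ⊆ U → ∀ u ∈ V, L u U ⊆ L u V

/-- `u` involutively divides `w` with respect to `D` and the set `U`. -/
def LDvd {n : ℕ} (D : InvDiv n) (U : Finset (Fin n → ℕ)) (u w : Fin n → ℕ) : Prop :=
  ∃ a ∈ D.L u U, w = u + a

/-!
Fix `m = u + w` and suppose no element of `U` involutively divides it. An ordinary divisor
`v ∈ U` of `m` then leaves a cofactor `m - v` outside the monoid `L(v, U)`, so some variable
`x_j` dividing `m - v` is non-multiplicative for `v`; by local involutivity `v · x_j`, which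
still divides `m`, has an involutive divisor `v' ∈ U`. Iterating from `v = u` yields an
infinite chain in `U` along non-multiplicative variables; continuity makes its first
`|U| + 1` terms pairwise distinct, which is impossible.
-/

namespace InvDiv

variable {n : ℕ} (D : InvDiv n) (U : Finset (Fin n → ℕ))

def multSubmonoid (u : Fin n → ℕ) : AddSubmonoid (Fin n → ℕ) where
  carrier := D.L u U
  add_mem' := D.add_mem u U _ _
  zero_mem' := D.zero_mem u U

lemma mem_L_of_forall_single_mem {u x : Fin n → ℕ}
    (hx : ∀ j, x j ≠ 0 → Pi.single j 1 ∈ D.L u U) : x ∈ D.L u U := by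
  change x ∈ D.multSubmonoid U u
  rw [← Finset.univ_sum_single x]
  refine AddSubmonoid.sum_mem _ fun j _ => ?_
  by_cases hj : x j = 0
  · simp [hj]
  · rw [show (Pi.single j (x j) : Fin n → ℕ) = x j • Pi.single j 1 by
      rw [← Pi.single_smul, smul_eq_mul, mul_one]]
    exact AddSubmonoid.nsmul_mem _ (hx j hj) _

def NonmultStep (v v' : Fin n → ℕ) : Prop :=
  ∃ j : Fin n, Pi.single j 1 ∉ D.L v U ∧ LDvd D U v' (v + Pi.single j 1)

def IsLocallyInvolutive : Prop :=
  ∀ u ∈ U, ∀ j : Fin n, Pi.single j 1 ∉ D.L u U → ∃ v ∈ U, LDvd D U v (u + Pi.single j 1)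

def IsContinuous : Prop :=
  ∀ (U : Finset (Fin n → ℕ)) (k : ℕ) (u : Fin k → (Fin n → ℕ)),
    (∀ i, u i ∈ U) →
    (∀ i : Fin k, ∀ h : (i : ℕ) + 1 < k, D.NonmultStep U (u i) (u ⟨(i : ℕ) + 1, h⟩)) →
    Function.Injective u

variable {D U}

theorem IsContinuous.not_exists_nonmultStep_seq (hD : D.IsContinuous) :
    ¬ ∃ f : ℕ → (Fin n → ℕ), (∀ k, f k ∈ U) ∧ ∀ k, D.NonmultStep U (f k) (f (k + 1)) := by
  rintro ⟨f, hfU, hstep⟩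
  let g : Fin (U.card + 1) → U := fun i => ⟨f i, hfU i⟩
  obtain ⟨i, i', hne, heq⟩ := Fintype.exists_ne_map_eq_of_card_lt g (by simp)
  have hinj := hD U (U.card + 1) (fun i => f i) (fun i => hfU i) (fun i _ => hstep i)
  exact hne (hinj (congrArg Subtype.val heq))

lemma exists_nonmultStep_of_not_LDvd
    (hloc : D.IsLocallyInvolutive U) {v m : Fin n → ℕ} (hv : v ∈ U) (hvm : v ≤ m) (hnot : ¬ LDvd D U v m) :
    ∃ v' ∈ U, v' ≤ m ∧ D.NonmultStep U v v' := by
  obtain ⟨c, rfl⟩ := exists_add_of_le hvm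
  have hc : c ∉ D.L v U := fun hc => hnot ⟨c, hc, rfl⟩
  obtain ⟨j, hcj, hj⟩ : ∃ j, c j ≠ 0 ∧ Pi.single j 1 ∉ D.L v U := by
    by_contra! h
    exact hc (D.mem_L_of_forall_single_mem U h)
  obtain ⟨v', hv', a, ha, hva⟩ := hloc v hv j hj
  have hsingle : Pi.single j 1 ≤ c := fun i => by
    rcases eq_or_ne i j with rfl | hij
    · simpa using Nat.one_le_iff_ne_zero.mpr hcj
    · simp [hij]
  refine ⟨v', hv', ?_, j, hj, a, ha, hva⟩
  calc v' ≤ v' + a := le_self_add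
    _ = v + Pi.single j 1 := hva.symm
    _ ≤ v + c := add_le_add_right hsingle v

end InvDiv

open InvDiv in
theorem locally_involutive_of_continuous {n : ℕ} (D : InvDiv n)
    (hcont : ∀ (U : Finset (Fin n → ℕ)) (k : ℕ) (u : Fin k → (Fin n → ℕ)),
      (∀ i, u i ∈ U) →
      (∀ i : Fin k, ∀ h : (i : ℕ) + 1 < k, ∃ j : Fin n,
        Pi.single j 1 ∉ D.L (u i) U ∧
        LDvd D U (u ⟨(i : ℕ) + 1, h⟩) (u i + Pi.single j 1)) →
      Function.Injective u)
    (U : Finset (Fin n → ℕ))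
    (hloc : ∀ u ∈ U, ∀ j : Fin n, Pi.single j 1 ∉ D.L u U →
      ∃ v ∈ U, LDvd D U v (u + Pi.single j 1)) :
    ∀ u ∈ U, ∀ w : Fin n → ℕ, ∃ v ∈ U, LDvd D U v (u + w) := by
  intro u hu w
  by_contra! hnot
  let Divisors := {v // v ∈ U ∧ v ≤ u + w}
  have hnext (v : Divisors) : ∃ v' : Divisors, D.NonmultStep U v.1 v'.1 := by
    obtain ⟨v', hv', hv'm, hstep⟩ :=
      exists_nonmultStep_of_not_LDvd hloc v.2.1 v.2.2 (hnot v.1 v.2.1)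
    exact ⟨⟨v', hv', hv'm⟩, hstep⟩
  choose next hnext using hnext
  let f (k : ℕ) : Fin n → ℕ := (next^[k] ⟨u, hu, le_self_add⟩).1
  refine IsContinuous.not_exists_nonmultStep_seq (U := U) hcont ⟨f, fun k => ?_, fun k => ?_⟩
  · exact (next^[k] _).2.1
  · simpa only [f, Function.iterate_succ_apply'] using hnext _
end

section
/- The set U = {xy, y², z} in K[x,y,z] with the variable order x ≻ y ≻ z is not finitely generated with respect to Pommaret division: there is no finite Pommaret-involutive set Ũ ⊇ U generating the same monomial ideal. In particular every Pommaret-involutive completion must contain all monomials xᵏy and xᵐz for all k, m ≥ 1. Hence Pommaret division is not noetherian. -/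
/-!
A Pommaret-involutive divisor `v` of `w` with some variable other than `x` occurring in it
cannot multiply by `x`, so it must already carry the full `x`-degree of `w`. Every divisor of
`xᵏy` (resp. `xᵏz`) in the ideal `⟨xy, y², z⟩` has the `y`- (resp. `z`-)part of `w`, so the
only candidate involutive divisor is `w` itself, which therefore lies in any Pommaret-involutive
generating set. These are infinitely many monomials.
-/

theorem PDvd.apply_zero_eq {n : ℕ} {v w : Fin (n + 1) → ℕ} (h : PDvd v w) {i : Fin (n + 1)}
    (hi : i ≠ 0) (hvi : v i ≠ 0) : v 0 = w 0 := by
  by_contra hne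
  exact hvi (h.2 0 (lt_of_le_of_ne (h.1 0) hne) i (Fin.pos_iff_ne_zero.mpr hi))

theorem PDvd.eq_of_mDvd {n : ℕ} {u v w : Fin (n + 1) → ℕ} (h : PDvd v w) (huv : mDvd u v)
    {i : Fin (n + 1)} (hi : i ≠ 0) (hui : u i ≠ 0) (htail : ∀ j ≠ 0, u j = w j) : v = w := by
  funext j
  by_cases hj : j = 0
  · subst hj
    exact h.apply_zero_eq hi (by have := huv i; omega)
  · have := huv j
    have := h.1 j
    have := htail j hj
    omega

theorem mem_of_pommaret_involutive {n : ℕ} {U : Finset (Fin (n + 1) → ℕ)}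
    {V : Set (Fin (n + 1) → ℕ)}
    (hgen : ∀ w, (∃ u ∈ U, mDvd u w) ↔ (∃ v ∈ V, mDvd v w))
    (hinv : ∀ w, (∃ v ∈ V, mDvd v w) → ∃ v ∈ V, PDvd v w)
    {w : Fin (n + 1) → ℕ} (hw : ∃ u ∈ U, mDvd u w)
    (htail : ∀ u ∈ U, mDvd u w → ∃ i ≠ 0, u i ≠ 0 ∧ ∀ j ≠ 0, u j = w j) : w ∈ V := by
  obtain ⟨v, hv, hvw⟩ := hinv w ((hgen w).mp hw)
  obtain ⟨u, hu, huv⟩ := (hgen v).mpr ⟨v, hv, fun _ => le_rfl⟩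
  obtain ⟨i, hi, hui, hutail⟩ := htail u hu fun j => (huv j).trans (hvw.1 j)
  rwa [← hvw.eq_of_mDvd huv hi hui hutail]

variable {k : ℕ}

theorem dvd_xk_y_iff (hk : 1 ≤ k) :
    ∀ u ∈ ({![1,1,0], ![0,2,0], ![0,0,1]} : Finset (Fin 3 → ℕ)),
      mDvd u ![k,1,0] ↔ u = ![1,1,0] := by
  simp only [Finset.mem_insert, Finset.mem_singleton]
  rintro u (rfl | rfl | rfl) <;> simp [mDvd, Fin.forall_fin_succ]
  omega

theorem dvd_xk_z_iff :
    ∀ u ∈ ({![1,1,0], ![0,2,0], ![0,0,1]} : Finset (Fin 3 → ℕ)),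
      mDvd u ![k,0,1] ↔ u = ![0,0,1] := by
  simp only [Finset.mem_insert, Finset.mem_singleton]
  rintro u (rfl | rfl | rfl) <;> simp [mDvd, Fin.forall_fin_succ]

theorem xk_y_mem_and_xk_z_mem_of_pommaret_involutive {V : Set (Fin 3 → ℕ)}
    (hgen : ∀ w, (∃ u ∈ ({![1,1,0], ![0,2,0], ![0,0,1]} : Finset (Fin 3 → ℕ)), mDvd u w) ↔
      (∃ v ∈ V, mDvd v w))
    (hinv : ∀ w, (∃ v ∈ V, mDvd v w) → ∃ v ∈ V, PDvd v w) (hk : 1 ≤ k) :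
    (![k,1,0] : Fin 3 → ℕ) ∈ V ∧ (![k,0,1] : Fin 3 → ℕ) ∈ V := by
  constructor
  · refine mem_of_pommaret_involutive hgen hinv
      ⟨_, by simp, (dvd_xk_y_iff hk _ (by simp)).mpr rfl⟩ fun u hu hdvd => ?_
    rw [(dvd_xk_y_iff hk u hu).mp hdvd]
    exact ⟨1, by decide, by decide, by simp [Fin.forall_fin_succ]⟩
  · refine mem_of_pommaret_involutive hgen hinv
      ⟨_, by simp, (dvd_xk_z_iff _ (by simp)).mpr rfl⟩ fun u hu hdvd => ?_
    rw [(dvd_xk_z_iff u hu).mp hdvd]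
    exact ⟨2, by decide, by decide, by simp [Fin.forall_fin_succ]⟩

theorem pommaret_not_noetherian_example :
    ∀ U : Finset (Fin 3 → ℕ),
      U = {![1,1,0], ![0,2,0], ![0,0,1]} →
      (¬ ∃ V : Finset (Fin 3 → ℕ), U ⊆ V ∧
          (∀ w, (∃ u ∈ U, mDvd u w) ↔ (∃ v ∈ V, mDvd v w)) ∧
          (∀ w, (∃ v ∈ V, mDvd v w) → ∃ v ∈ V, PDvd v w)) ∧
      (∀ V : Set (Fin 3 → ℕ), ↑U ⊆ V →
          (∀ w, (∃ u ∈ U, mDvd u w) ↔ (∃ v ∈ V, mDvd v w)) →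
          (∀ w, (∃ v ∈ V, mDvd v w) → ∃ v ∈ V, PDvd v w) →
          ∀ k : ℕ, 1 ≤ k →
            (![k,1,0] : Fin 3 → ℕ) ∈ V ∧ (![k,0,1] : Fin 3 → ℕ) ∈ V) := by
  rintro U rfl
  refine ⟨?_, fun V _ hgen hinv k hk =>
    xk_y_mem_and_xk_z_mem_of_pommaret_involutive hgen hinv hk⟩
  rintro ⟨V, -, hgen, hinv⟩
  have hmem : ∀ k : ℕ, (![k + 1, 1, 0] : Fin 3 → ℕ) ∈ (V : Set (Fin 3 → ℕ)) := fun k =>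
    (xk_y_mem_and_xk_z_mem_of_pommaret_involutive (V := V) (by simpa using hgen)
      (by simpa using hinv) (Nat.le_add_left 1 k)).1
  have hinj : Function.Injective fun k : ℕ => (![k + 1, 1, 0] : Fin 3 → ℕ) := fun a b h => by
    simpa using congrFun h 0
  exact Set.infinite_of_injective_forall_mem hinj hmem V.finite_toSet
end
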